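/- arXiv:2202.00768 — 8 statements merged into one kernel-verified Lean document; each statement's English description precedes it below -/
import Mathlib

section
/- Let G be a finite directed graph in which every vertex has outdegree exactly 1, and let V be a subset of the vertices (the 'marked' vertices) such that every vertex of indegree 0 is marked and every unmarked vertex has indegree at least 2. Then the total number of vertices of G is at most twice the number of marked vertices. -/
/-- A finite functional graph (every vertex has outdegree exactly 1, given by `f`)
with a set `V` of marked vertices such that every vertex of indegree 0 is marked and
every unmarked vertex has indegree at least 2 satisfies `|vertices| ≤ 2 |V|`. -/
theorem stmt0 {α : Type*} [Fintype α] [DecidableEq α] (f : α → α) (V : Finset α)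
    (h0 : ∀ v : α, (Finset.univ.filter fun x => f x = v).card = 0 → v ∈ V)
    (h2 : ∀ v : α, v ∉ V → 2 ≤ (Finset.univ.filter fun x => f x = v).card) :
    Fintype.card α ≤ 2 * V.card := by
  have hsum : Fintype.card α
      = ∑ v : α, (Finset.univ.filter fun x => f x = v).card := by
    rw [← Finset.card_univ]
    exact Finset.card_eq_sum_card_fiberwise (fun x _ => Finset.mem_univ (f x))
  have hsub : Finset.univ \ V ⊆ Finset.univ := Finset.sdiff_subset
  have h1 : 2 * (Finset.univ \ V).card
      ≤ ∑ v ∈ Finset.univ \ V, (Finset.univ.filter fun x => f x = v).card := by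
    calc 2 * (Finset.univ \ V).card = (Finset.univ \ V).card • 2 := by
          rw [smul_eq_mul, mul_comm]
      _ ≤ _ := Finset.card_nsmul_le_sum _ _ 2 fun v hv => h2 v (Finset.mem_sdiff.mp hv).2
  have h3 : ∑ v ∈ Finset.univ \ V, (Finset.univ.filter fun x => f x = v).card
      ≤ ∑ v : α, (Finset.univ.filter fun x => f x = v).card :=
    Finset.sum_le_sum_of_subset hsub
  have hcard : (Finset.univ \ V).card = Fintype.card α - V.card := by
    rw [Finset.card_sdiff_of_subset (Finset.subset_univ V), Finset.card_univ]
  have hV : V.card ≤ Fintype.card α := by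
    rw [← Finset.card_univ]; exact Finset.card_le_card (Finset.subset_univ V)
  omega
end

section
/- Let f : P → P be a function on a finite set P, and let V ⊆ P be a subset such that V ⊆ f(P) ∪ V, every element of P \ V has at least two preimages under f, and P = ⋃_{n≥0} f^n(V). Then |P| ≤ 2|V|. -/
/-- If `f : P → P` on a finite set, `V ⊆ P` with `V ⊆ f(P) ∪ V`, every element of
`P \ V` has at least two preimages under `f`, and `P = ⋃_{n ≥ 0} f^n(V)`,
then `|P| ≤ 2 |V|`. -/
theorem stmt1 {P : Type*} [Fintype P] [DecidableEq P] (f : P → P) (V : Finset P)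
    (hV : ∀ v ∈ V, v ∈ Set.range f ∨ v ∈ V)
    (hfib : ∀ p : P, p ∉ V → 2 ≤ (Finset.univ.filter fun x => f x = p).card)
    (horb : ∀ p : P, ∃ n : ℕ, ∃ v ∈ V, f^[n] v = p) :
    Fintype.card P ≤ 2 * V.card := by
  have h1 : Fintype.card P = ∑ p : P, (Finset.univ.filter fun x => f x = p).card := by
    rw [← Finset.card_univ]
    exact Finset.card_eq_sum_card_fiberwise (fun x _ => Finset.mem_univ (f x))
  have h2 : ∑ p ∈ Vᶜ, (Finset.univ.filter fun x => f x = p).card ≤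
      ∑ p : P, (Finset.univ.filter fun x => f x = p).card :=
    Finset.sum_le_sum_of_subset (Finset.subset_univ _)
  have h3 : Vᶜ.card • 2 ≤ ∑ p ∈ Vᶜ, (Finset.univ.filter fun x => f x = p).card :=
    Finset.card_nsmul_le_sum _ _ _ (fun p hp => hfib p (Finset.mem_compl.mp hp))
  have h4 : Vᶜ.card = Fintype.card P - V.card := Finset.card_compl V
  have h5 : V.card ≤ Fintype.card P := Finset.card_le_univ V
  simp only [smul_eq_mul] at h3
  omega
end

section
/- Let u₁, …, uₙ and w₁, …, w_m be pairwise distinct complex numbers. Then the (n−2) × m matrix with entries 1/((w_j − u₁)(w_j − u₂)(w_j − u_t)) for 3 ≤ t ≤ n, 1 ≤ j ≤ m, has rank equal to min(n−2, m). -/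
/-!
Dividing column `j` by the nonzero scalar `(w_j - u₁)(w_j - u₂)` leaves the Cauchy matrix
`(1/(w_j - u_t))`. If `∑ᵢ gᵢ/(y - xᵢ)` vanishes at `p` distinct points `y = y_j` and there are
only `k ≤ p` nodes `xᵢ`, then clearing denominators gives a polynomial of degree `< k` with
`p` roots, hence zero; its value at `xᵢ` is `gᵢ` times a nonzero factor. So the rows of a
`k × p` Cauchy matrix are independent when `k ≤ p`, and transposing handles `k > p`.
-/

open Finset Polynomial Lagrange Matrix

variable {K : Type*} [Field K] {ι κ : Type*}

def cauchyMatrix (x : ι → K) (y : κ → K) : Matrix ι κ K :=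
  of fun i j => (y j - x i)⁻¹

theorem cauchyMatrix_transpose (x : ι → K) (y : κ → K) :
    (cauchyMatrix x y)ᵀ = -cauchyMatrix y x := by
  ext j i
  simp [cauchyMatrix, ← inv_neg]

variable [Fintype ι] [Fintype κ]

theorem linearIndependent_row_cauchyMatrix {x : ι → K} {y : κ → K} (hx : x.Injective)
    (hy : y.Injective) (hxy : ∀ i j, x i ≠ y j) (hcard : Fintype.card ι ≤ Fintype.card κ) :
    LinearIndependent K (cauchyMatrix x y).row := by
  classical
  rw [Fintype.linearIndependent_iff]
  intro g hg
  have hw : ∀ i, nodalWeight univ x i ≠ 0 := fun i => nodalWeight_ne_zero hx.injOn (mem_univ i)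
  -- The Lagrange interpolant of `r` is `∏ (X - x i) * ∑ g i / (X - x i)` (barycentric form).
  set r : ι → K := fun i => g i / nodalWeight univ x i
  have hvanish : ∀ j ∈ univ, (interpolate univ x r).eval (y j) = 0 := by
    intro j _
    have hj : ∑ i, g i * (y j - x i)⁻¹ = 0 := by
      simpa [cauchyMatrix] using congrFun hg j
    rw [eval_interpolate_not_at_node _ fun i _ => (hxy i j).symm, ← mul_zero (eval _ _), ← hj]
    congr 1
    refine sum_congr rfl fun i _ => ?_
    simp only [r]
    field_simp [hw i]
  have hP : interpolate univ x r = 0 :=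
    Polynomial.eq_zero_of_degree_lt_of_eval_index_eq_zero univ hy.injOn
      ((degree_interpolate_lt _ hx.injOn).trans_le (by simpa using hcard)) hvanish
  intro i
  have := eval_interpolate_at_node r hx.injOn (mem_univ i)
  rwa [hP, eval_zero, eq_comm, div_eq_zero_iff, or_iff_left (hw i)] at this

theorem rank_cauchyMatrix {x : ι → K} {y : κ → K} (hx : x.Injective) (hy : y.Injective)
    (hxy : ∀ i j, x i ≠ y j) :
    (cauchyMatrix x y).rank = min (Fintype.card ι) (Fintype.card κ) := by
  rcases le_total (Fintype.card ι) (Fintype.card κ) with h | h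
  · rw [min_eq_left h, (linearIndependent_row_cauchyMatrix hx hy hxy h).rank_matrix]
  · rw [min_eq_right h, ← rank_transpose, cauchyMatrix_transpose]
    exact (linearIndependent_row_cauchyMatrix hy hx (fun j i => (hxy i j).symm) h).neg.rank_matrix

/-- For pairwise distinct complex numbers `u₁, …, uₙ` (`n ≥ 3`) and `w₁, …, w_m`,
the `(n-2) × m` matrix with entries `1/((w_j - u₁)(w_j - u₂)(w_j - u_t))`,
`3 ≤ t ≤ n`, `1 ≤ j ≤ m`, has full rank `min (n-2) m`. -/
theorem stmt3 (n m : ℕ) (hn : 3 ≤ n) (u : Fin n → ℂ) (w : Fin m → ℂ)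
    (hdist : Function.Injective (Sum.elim u w : Fin n ⊕ Fin m → ℂ)) :
    Matrix.rank (Matrix.of fun (t : Fin (n - 2)) (j : Fin m) =>
      ((w j - u ⟨0, by omega⟩) * (w j - u ⟨1, by omega⟩) *
        (w j - u ⟨t.val + 2, by have := t.isLt; omega⟩))⁻¹) = min (n - 2) m := by
  obtain ⟨hu, hw, huw⟩ := Sum.elim_injective.mp hdist
  set v : Fin (n - 2) → ℂ := fun t => u ⟨t.val + 2, by omega⟩
  have hv : v.Injective := fun s t h => by simpa [Fin.ext_iff] using hu h
  set d : Fin m → ℂ := fun j => ((w j - u ⟨0, by omega⟩) * (w j - u ⟨1, by omega⟩))⁻¹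
  have hd : ∀ j, d j ≠ 0 := fun j => by
    simp [d, sub_eq_zero, (huw _ j).symm]
  have hfactor : Matrix.of (fun t j => ((w j - u ⟨0, by omega⟩) * (w j - u ⟨1, by omega⟩) *
      (w j - v t))⁻¹) = cauchyMatrix v w * diagonal d := by
    ext t j
    simp [cauchyMatrix, d, mul_comm]
  rw [hfactor, rank_mul_eq_left_of_isUnit_det _ _ (by simp [det_diagonal, prod_ne_zero_iff, hd]),
    rank_cauchyMatrix hv hw fun t j => huw _ j, Fintype.card_fin, Fintype.card_fin]
end

section
/- Let g be a holomorphic function on a neighborhood U of c* ∈ ℂ with g(c*) = v*, g'(c*) = 0, g''(c*) ≠ 0, and suppose there is a biholomorphic chart η on U with η(c*) = 0 and g(w) = η(w)² + v* for all w ∈ U. Let u₁,…,uₙ be distinct complex numbers all different from c*. Then as t → 0⁺, the sum over the two preimages w ∈ U of v* + t of 1/(∏ᵢ(w − uᵢ) · g'(w)²) equals C/t + O(1), where C = 1/(∏ᵢ(c* − uᵢ) · g''(c*)) ≠ 0. -/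
open Topology Filter Asymptotics

/-! With `ψ` the local inverse of `η` at `0`, the preimages of `v* + t` are `ψ (±√t)`, and
`g' (ψ s) = 2 s η' (ψ s)`. Hence the sum equals `(h √t + h (-√t)) / (4 t)` for the function
`h s = 1 / (∏ᵢ (ψ s - uᵢ) · η' (ψ s)²)`, analytic at `0`. Its even part `h s + h (-s) - 2 h 0` is
`O(s²)`, and `g'' c* = 2 η' (c*)²` identifies `C` with `h 0 / 2`. -/

variable {𝕜 E : Type*} [NontriviallyNormedField 𝕜] [NormedAddCommGroup E] [NormedSpace 𝕜 E]

theorem AnalyticAt.isBigO_add_add_sub_two_nsmul {f : 𝕜 → E} {x : 𝕜} (hf : AnalyticAt 𝕜 f x) :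
    (fun y => f (x + y) + f (x - y) - 2 • f x) =O[𝓝 0] fun y => ‖y‖ ^ 2 := by
  obtain ⟨p, hp⟩ := hf
  have hplus := hp.isBigO_sub_partialSum_pow 2
  have hminus : (fun y => f (x - y) - p.partialSum 2 (-y)) =O[𝓝 0] fun y => ‖y‖ ^ 2 := by
    simpa [Function.comp_def, sub_eq_add_neg] using
      hplus.comp_tendsto (continuous_neg.tendsto' (0 : 𝕜) 0 neg_zero)
  refine (hplus.add hminus).congr_left fun y => ?_
  simp only [FormalMultilinearSeries.partialSum, Finset.sum_range_succ, Finset.sum_range_zero,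
    zero_add, hp.coeff_zero]
  simp only [FormalMultilinearSeries.apply_eq_pow_smul_coeff, pow_one, neg_smul, two_nsmul]
  abel

theorem tendsto_ofReal_sqrt_nhdsGT_zero :
    Tendsto (fun t : ℝ => ((√t : ℝ) : ℂ)) (𝓝[>] 0) (𝓝 0) := by
  have := (Complex.continuous_ofReal.comp Real.continuous_sqrt).tendsto 0
  simpa [Function.comp_def] using this.mono_left nhdsWithin_le_nhds

theorem AnalyticAt.isBigO_add_add_neg_sqrt_sub_two_mul_div {f : ℂ → ℂ} (hf : AnalyticAt ℂ f 0) :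
    (fun t : ℝ => (f √t + f (-√t) - 2 * f 0) / t) =O[𝓝[>] 0] fun _ => (1 : ℝ) := by
  have h := (hf.isBigO_add_add_sub_two_nsmul.comp_tendsto tendsto_ofReal_sqrt_nhdsGT_zero).mul
    (isBigO_norm_right.2 (isBigO_refl (fun t : ℝ => (t : ℂ)⁻¹) (𝓝[>] 0)))
  refine h.congr' ?_ ?_
  · filter_upwards with t
    simp [div_eq_mul_inv, two_mul]
  · filter_upwards [self_mem_nhdsWithin] with t (ht : 0 < t)
    simp [Real.sq_sqrt ht.le, abs_of_pos ht, ht.ne']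

theorem AnalyticAt.exists_analyticAt_rightInverse [CompleteSpace 𝕜] [CharZero 𝕜] {f : 𝕜 → 𝕜}
    {x : 𝕜} (hf : AnalyticAt 𝕜 f x) (hf' : deriv f x ≠ 0) :
    ∃ ψ : 𝕜 → 𝕜, AnalyticAt 𝕜 ψ (f x) ∧ ψ (f x) = x ∧ ∀ᶠ y in 𝓝 (f x), f (ψ y) = y :=
  ⟨_, hf.analyticAt_localInverse hf', HasStrictFDerivAt.localInverse_apply_image _,
    HasStrictFDerivAt.eventually_right_inverse _⟩

theorem add_eq_add_of_mem_pair {α M : Type*} [AddCommMagma M] (f : α → M) {a b x y : α}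
    (ha : a ∈ ({x, y} : Set α)) (hb : b ∈ ({x, y} : Set α)) (hab : a ≠ b) :
    f x + f y = f a + f b := by
  rcases ha with rfl | rfl <;> rcases hb with rfl | rfl
  exacts [absurd rfl hab, rfl, add_comm _ _, absurd rfl hab]

section NormalForm

variable {U : Set 𝕜} {g η : 𝕜 → 𝕜} {v : 𝕜}

theorem deriv_eq_of_eqOn_sq_add_const (hU : IsOpen U) (hη : DifferentiableOn 𝕜 η U)
    (hg : ∀ w ∈ U, g w = η w ^ 2 + v) {w : 𝕜} (hw : w ∈ U) :
    deriv g w = 2 * η w * deriv η w := by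
  have hU' : U ∈ 𝓝 w := hU.mem_nhds hw
  rw [(eventuallyEq_of_mem hU' hg).deriv_eq,
    (((hη.differentiableAt hU').hasDerivAt.fun_pow 2).add_const v).deriv]
  ring

theorem inv_mul_deriv_sq_eq_of_eqOn_sq_add_const (hU : IsOpen U) (hη : DifferentiableOn 𝕜 η U)
    (hg : ∀ w ∈ U, g w = η w ^ 2 + v) (p : 𝕜) {w : 𝕜} (hw : w ∈ U) :
    (p * deriv g w ^ 2)⁻¹ = (p * deriv η w ^ 2)⁻¹ / (4 * η w ^ 2) := by
  rw [deriv_eq_of_eqOn_sq_add_const hU hη hg hw]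
  ring

theorem iteratedDeriv_two_eq_of_eqOn_sq_add_const [CompleteSpace 𝕜] (hU : IsOpen U)
    (hη : AnalyticOnNhd 𝕜 η U) (hg : ∀ w ∈ U, g w = η w ^ 2 + v) {c : 𝕜} (hc : c ∈ U)
    (hηc : η c = 0) : iteratedDeriv 2 g c = 2 * deriv η c ^ 2 := by
  have hU' : U ∈ 𝓝 c := hU.mem_nhds hc
  have hg' : deriv g =ᶠ[𝓝 c] fun w => 2 * η w * deriv η w :=
    eventuallyEq_of_mem hU' fun w hw => deriv_eq_of_eqOn_sq_add_const hU hη.differentiableOn hg hw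
  rw [iteratedDeriv_succ, iteratedDeriv_one, hg'.deriv_eq,
    ((((hη c hc).differentiableAt.hasDerivAt.const_mul 2).fun_mul
      (hη.deriv c hc).differentiableAt.hasDerivAt)).deriv, hηc]
  ring

theorem add_eq_add_of_setOf_eq_pair [CharZero 𝕜] {M : Type*} [AddCommMagma M] (f : 𝕜 → M)
    (hg : ∀ w ∈ U, g w = η w ^ 2 + v) {a b s t x y : 𝕜} (ha : a ∈ U) (hb : b ∈ U)
    (has : η a = s) (hbs : η b = -s) (hst : s ^ 2 = t) (ht : t ≠ 0)
    (hxy : {w ∈ U | g w = v + t} = {x, y}) : f x + f y = f a + f b := by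
  have hmem : ∀ w ∈ U, η w ^ 2 = t → w ∈ ({x, y} : Set 𝕜) :=
    fun w hw hwt => hxy ▸ ⟨hw, by rw [hg w hw, hwt, add_comm]⟩
  refine add_eq_add_of_mem_pair f (hmem a ha (by rw [has, hst]))
    (hmem b hb (by rw [hbs, neg_sq, hst])) fun hab => ht ?_
  have hs : s = 0 := by linear_combination (has.symm.trans (hab ▸ hbs)) / 2
  rw [← hst, hs, zero_pow two_ne_zero]

end NormalForm

theorem stmt7_general (n : ℕ) (U : Set ℂ) (hU : IsOpen U) (cstar vstar : ℂ)
    (hc : cstar ∈ U) (g η : ℂ → ℂ)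
    (hη : AnalyticOnNhd ℂ η U) (hη0 : η cstar = 0)
    (hg : ∀ w ∈ U, g w = (η w) ^ 2 + vstar)
    (hg'' : iteratedDeriv 2 g cstar ≠ 0)
    (u : Fin n → ℂ) (huc : ∀ i, u i ≠ cstar)
    (wp wm : ℝ → ℂ)
    (hw : ∀ᶠ t in 𝓝[>] (0 : ℝ), wp t ∈ U ∧ wm t ∈ U ∧ wp t ≠ wm t ∧
      {w ∈ U | g w = vstar + (t : ℂ)} = {wp t, wm t}) :
    Asymptotics.IsBigO (𝓝[>] (0 : ℝ))
      (fun t : ℝ =>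
        ((∏ i, (wp t - u i)) * (deriv g (wp t)) ^ 2)⁻¹
          + ((∏ i, (wm t - u i)) * (deriv g (wm t)) ^ 2)⁻¹
          - ((∏ i, (cstar - u i)) * iteratedDeriv 2 g cstar)⁻¹ / (t : ℂ))
      (fun _ => (1 : ℝ)) ∧
    ((∏ i, (cstar - u i)) * iteratedDeriv 2 g cstar)⁻¹ ≠ 0 := by
  have hg2 := iteratedDeriv_two_eq_of_eqOn_sq_add_const hU hη hg hc hη0
  have hd : deriv η cstar ≠ 0 := by rintro hd; simp [hg2, hd] at hg''
  obtain ⟨ψ, hψ, hψ0, hηψ⟩ := (hη cstar hc).exists_analyticAt_rightInverse hd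
  rw [hη0] at hψ hψ0 hηψ
  set P : ℂ → ℂ := fun w => ∏ i, (w - u i)
  have hP : P cstar ≠ 0 := Finset.prod_ne_zero_iff.2 fun i _ => sub_ne_zero.2 (huc i).symm
  set h : ℂ → ℂ := fun s => (P (ψ s) * deriv η (ψ s) ^ 2)⁻¹
  have hh : AnalyticAt ℂ h 0 := by
    have hPψ : AnalyticAt ℂ (fun s => P (ψ s)) 0 :=
      Finset.analyticAt_fun_prod _ fun i _ => hψ.sub analyticAt_const
    have hη'ψ : AnalyticAt ℂ (fun s => deriv η (ψ s)) 0 := (hη.deriv _ (hψ0 ▸ hc)).comp hψ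
    exact (hPψ.mul (hη'ψ.pow 2)).inv (by simp [hψ0, hP, hd])
  refine ⟨?_, inv_ne_zero (mul_ne_zero hP hg'')⟩
  have hψU : ∀ᶠ s in 𝓝 0, ψ s ∈ U ∧ η (ψ s) = s :=
    (hψ.continuousAt.eventually_mem (hψ0 ▸ hU.mem_nhds hc)).and hηψ
  refine (hh.isBigO_add_add_neg_sqrt_sub_two_mul_div.const_mul_left (4⁻¹ : ℂ)).congr' ?_ .rfl
  filter_upwards [hw, tendsto_ofReal_sqrt_nhdsGT_zero.eventually hψU,
    (neg_zero (G := ℂ) ▸ tendsto_ofReal_sqrt_nhdsGT_zero.neg).eventually hψU, self_mem_nhdsWithin]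
    with t ⟨_, _, _, hpre⟩ ⟨hsU, hs⟩ ⟨hnsU, hns⟩ (ht : 0 < t)
  set s : ℂ := ((√t : ℝ) : ℂ)
  have hs2 : s ^ 2 = t := by rw [← Complex.ofReal_pow, Real.sq_sqrt ht.le]
  rw [add_eq_add_of_setOf_eq_pair (fun w => (P w * deriv g w ^ 2)⁻¹) hg hsU hnsU hs hns hs2
    (Complex.ofReal_ne_zero.2 ht.ne') hpre]
  have hterm := inv_mul_deriv_sq_eq_of_eqOn_sq_add_const hU hη.differentiableOn hg
  rw [hterm _ hsU, hterm _ hnsU, hs, hns, neg_sq, hs2, hg2]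
  simp only [h, P, hψ0]
  ring

/-- Asymptotics of the local pushforward near a simple critical point. Let `g` be
holomorphic on a neighborhood `U` of `c*` with critical value `v* = g(c*)`, given
in the local normal form `g = η² + v*` for a biholomorphic chart `η` with
`η(c*) = 0`; let `u₁, …, uₙ` be distinct complex numbers, all different from `c*`.
If for small `t > 0` the preimages of `v* + t` in `U` are exactly the two points
`w₊(t) ≠ w₋(t)`, then
`∑_{w ∈ U, g(w) = v* + t} 1/(∏ᵢ (w - uᵢ) · g'(w)²) = C/t + O(1)` as `t → 0⁺`,
where `C = 1/(∏ᵢ (c* - uᵢ) · g''(c*))` is nonzero. -/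
theorem stmt7 (n : ℕ) (U : Set ℂ) (hU : IsOpen U) (cstar vstar : ℂ)
    (hc : cstar ∈ U) (g η : ℂ → ℂ)
    (hη : AnalyticOnNhd ℂ η U) (hηinj : Set.InjOn η U) (hη0 : η cstar = 0)
    (hg : ∀ w ∈ U, g w = (η w) ^ 2 + vstar)
    (hg' : deriv g cstar = 0) (hg'' : iteratedDeriv 2 g cstar ≠ 0)
    (u : Fin n → ℂ) (hu : Function.Injective u) (huc : ∀ i, u i ≠ cstar)
    (wp wm : ℝ → ℂ)
    (hw : ∀ᶠ t in 𝓝[>] (0 : ℝ), wp t ∈ U ∧ wm t ∈ U ∧ wp t ≠ wm t ∧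
      {w ∈ U | g w = vstar + (t : ℂ)} = {wp t, wm t}) :
    Asymptotics.IsBigO (𝓝[>] (0 : ℝ))
      (fun t : ℝ =>
        ((∏ i, (wp t - u i)) * (deriv g (wp t)) ^ 2)⁻¹
          + ((∏ i, (wm t - u i)) * (deriv g (wm t)) ^ 2)⁻¹
          - ((∏ i, (cstar - u i)) * iteratedDeriv 2 g cstar)⁻¹ / (t : ℂ))
      (fun _ => (1 : ℝ)) ∧
    ((∏ i, (cstar - u i)) * iteratedDeriv 2 g cstar)⁻¹ ≠ 0 :=
  stmt7_general n U hU cstar vstar hc g η hη hη0 hg hg'' u huc wp wm hw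
end

section
/- The rational map h(z) = −z(z−2)³/(2z−1)³ satisfies h({0,1,∞}) ⊆ {0,1,∞} and its critical values are contained in {0,1,∞}; i.e., h is a Belyi-extending map. -/
open Polynomial

/-- The rational map `h(z) = -z(z-2)³/(2z-1)³` (written as `N/D` with
`N = -X(X-2)³`, `D = (2X-1)³`) is Belyi-extending: `h(0) = 0`, `h(1) = 1`,
`h(∞) ∈ {0, 1, ∞}` (since `deg N = 4 > 3 = deg D`, `h(∞) = ∞`), and every finite
critical point `z` (zero of the Wronskian `N'D - ND'`) has `h(z) ∈ {0, 1, ∞}`. -/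
theorem stmt11 :
    let N : ℂ[X] := -(X * (X - C 2) ^ 3)
    let D : ℂ[X] := (2 * X - 1) ^ 3
    N.eval 0 = 0 ∧ N.eval 1 = D.eval 1 ∧
    N.natDegree = 4 ∧ D.natDegree = 3 ∧
    ∀ z : ℂ, (derivative N * D - N * derivative D).eval z = 0 →
      (N.eval z = 0 ∨ N.eval z = D.eval z ∨ D.eval z = 0) := by
  intro N D
  refine ⟨by simp [N], by norm_num [N, D], ?_, ?_, ?_⟩
  · show (-(X * (X - C 2) ^ 3) : ℂ[X]).natDegree = 4
    rw [natDegree_neg, natDegree_mul X_ne_zero (pow_ne_zero _ (X_sub_C_ne_zero 2)),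
      natDegree_X, natDegree_pow, natDegree_X_sub_C]
  · show ((2 * X - 1 : ℂ[X]) ^ 3).natDegree = 3
    compute_degree!
  · intro z hz
    simp only [N, D, derivative_neg, derivative_mul, derivative_X, derivative_pow,
      derivative_sub, derivative_C, derivative_ofNat, derivative_one, eval_mul, eval_sub, eval_add,
      eval_neg, eval_pow, eval_X, eval_C, eval_one, eval_ofNat, eval_natCast,
      eval_smul, eval_zero, zero_mul, mul_zero, zero_add, map_ofNat, one_mul, mul_one, sub_zero] at hz
    have key : (z - 2) ^ 2 * (2 * z - 1) ^ 2 * (z + 1) ^ 2 = 0 := by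
      linear_combination (-(1:ℂ)/2) * hz
    rcases mul_eq_zero.mp key with h | h
    · rcases mul_eq_zero.mp h with h | h
      · have hz2 : z = 2 := by
          have := pow_eq_zero_iff (n := 2) (by norm_num) |>.mp h
          exact sub_eq_zero.mp this
        left; simp [N, hz2]
      · have hz2 : z = 1/2 := by
          have := pow_eq_zero_iff (n := 2) (by norm_num) |>.mp h
          linear_combination this / 2
        right; right; simp [D, hz2]
    · have hz2 : z = -1 := by
        have := pow_eq_zero_iff (n := 2) (by norm_num) |>.mp h
        linear_combination this
      right; left; simp [N, D, hz2]; norm_num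
end

section
/- The rational map f(z) = −2^{1/3}·z(z³+2)/(2z³+1) has exactly three critical points, namely the cube roots of unity 1, ω, ω², each of local degree 3, with f(1) = −2^{1/3}, f(ω) = −2^{1/3}ω, f(ω²) = −2^{1/3}ω²; moreover f(−2^{1/3}·λ) = 0 for each cube root of unity λ and f(0) = 0, so f is postcritically finite with postcritical set {−2^{1/3}, −2^{1/3}ω, −2^{1/3}ω², 0}. -/
open Polynomial

/-- The rational map `f(z) = -c·z(z³+2)/(2z³+1)` with `c = 2^{1/3}` (written as
`N/D`): its finite critical points are exactly the cube roots of unity, each of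
local degree 3 (the Wronskian `N'D - ND'` is a nonzero constant times
`(X³-1)²`), `∞` is not critical (`deg N = 4`, `deg D = 3`), `f(λ) = -cλ` for
each cube root of unity `λ`, `f(-cλ) = 0` and `f(0) = 0`; hence `f` is
postcritically finite with postcritical set `{-c, -cω, -cω², 0}`. -/
theorem stmt12 :
    let c : ℂ := ((2 : ℝ) ^ ((1 : ℝ) / 3) : ℝ)
    let N : ℂ[X] := C (-c) * (X * (X ^ 3 + C 2))
    let D : ℂ[X] := 2 * X ^ 3 + 1
    (∃ γ : ℂ, γ ≠ 0 ∧
      derivative N * D - N * derivative D = C γ * (X ^ 3 - 1) ^ 2) ∧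
    N.natDegree = 4 ∧ D.natDegree = 3 ∧
    (∀ lam : ℂ, lam ^ 3 = 1 →
      N.eval lam = (-c * lam) * D.eval lam ∧ D.eval lam ≠ 0 ∧
      N.eval (-c * lam) = 0 ∧ D.eval (-c * lam) ≠ 0) ∧
    N.eval 0 = 0 ∧ D.eval 0 ≠ 0 := by
  intro c N D
  have hcpos : (0:ℝ) < (2 : ℝ) ^ ((1 : ℝ) / 3) := Real.rpow_pos_of_pos (by norm_num) _
  have hc0 : c ≠ 0 := by
    simp only [c, ne_eq, Complex.ofReal_eq_zero]; exact ne_of_gt hcpos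
  have hc3 : c ^ 3 = 2 := by
    have : ((2 : ℝ) ^ ((1 : ℝ) / 3)) ^ (3:ℕ) = 2 := by
      rw [← Real.rpow_natCast ((2:ℝ) ^ ((1:ℝ)/3)) 3, ← Real.rpow_mul (by norm_num)]
      norm_num
    calc c ^ 3 = (((2 : ℝ) ^ ((1 : ℝ) / 3)) ^ (3:ℕ) : ℝ) := by push_cast [c]; ring
    _ = 2 := by rw [this]; norm_num
  refine ⟨⟨-2 * c, by simpa using hc0, ?_⟩, ?_, ?_, ?_, ?_, ?_⟩
  · simp only [N, D]
    simp only [derivative_mul, derivative_C, derivative_X, derivative_add,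
      derivative_pow, derivative_one, derivative_ofNat, map_mul, map_neg, map_ofNat, Nat.cast_ofNat]
    ring
  · have h4 : (X * (X ^ 3 + C (2:ℂ))).natDegree = 4 := by compute_degree!
    simp only [N, natDegree_C_mul (neg_ne_zero.2 hc0), h4]
  · simp only [D]; compute_degree!
  · intro lam h1
    have hD : D.eval lam = 3 := by simp [D, h1]; norm_num
    refine ⟨?_, by rw [hD]; norm_num, ?_, ?_⟩
    · simp only [N, eval_mul, eval_C, eval_X, eval_add, eval_pow, eval_ofNat, hD, h1]
      ring
    · have : (-c * lam) ^ 3 = -2 := by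
        rw [mul_pow, neg_pow, h1, hc3]; ring
      simp only [N, eval_mul, eval_C, eval_X, eval_add, eval_pow, this]
      ring
    · have key : (c * lam) ^ 3 = 2 := by rw [mul_pow, h1, hc3]; ring
      simp only [D, eval_add, eval_mul, eval_ofNat, eval_pow, eval_X, eval_one, neg_mul]
      rw [Odd.neg_pow ⟨1, by norm_num⟩, key]
      norm_num
  · simp [N]
  · simp [D]
end

section
/- Let f : S → S be a function on a finite set with |S| ≥ 4, and let V ⊆ S with |V| = 3 consist of elements v₁, v₂, v₃ such that v₃ ∉ f(S), v₁, v₂ ∈ f(S), S = ⋃_{n≥0} f^n(V), and every element of S \ V has at least 2 preimages under f. Then |S| = 4, and denoting the fourth element by t, the indegrees of v₁, v₂, v₃, t (i.e., fiber sizes |f⁻¹(·)|) are 1, 1, 0, 2 respectively. -/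
/-- Let `f : S → S` on a finite set with `|S| ≥ 4` and `V = {v₁, v₂, v₃}` with
`v₃ ∉ f(S)`, `v₁, v₂ ∈ f(S)`, `S = ⋃_{n ≥ 0} f^n(V)`, and every element of
`S \ V` having at least 2 preimages. Then `|S| = 4` and, denoting the fourth
element by `t`, the fiber cardinalities over `v₁, v₂, v₃, t` are `1, 1, 0, 2`. -/
theorem stmt16 {S : Type*} [Fintype S] [DecidableEq S] (f : S → S)
    (v₁ v₂ v₃ : S) (h12 : v₁ ≠ v₂) (h13 : v₁ ≠ v₃) (h23 : v₂ ≠ v₃)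
    (hcard : 4 ≤ Fintype.card S)
    (hv₃ : v₃ ∉ Set.range f) (hv₁ : v₁ ∈ Set.range f) (hv₂ : v₂ ∈ Set.range f)
    (horb : ∀ s : S, ∃ n : ℕ, ∃ v ∈ ({v₁, v₂, v₃} : Finset S), f^[n] v = s)
    (hfib : ∀ s : S, s ∉ ({v₁, v₂, v₃} : Finset S) →
      2 ≤ (Finset.univ.filter fun x => f x = s).card) :
    Fintype.card S = 4 ∧
    ∃ t : S, t ∉ ({v₁, v₂, v₃} : Finset S) ∧
      (Finset.univ.filter fun x => f x = v₁).card = 1 ∧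
      (Finset.univ.filter fun x => f x = v₂).card = 1 ∧
      (Finset.univ.filter fun x => f x = v₃).card = 0 ∧
      (Finset.univ.filter fun x => f x = t).card = 2 := by
  classical
  set V : Finset S := {v₁, v₂, v₃} with hV
  have hVcard : V.card = 3 := by
    rw [hV]
    rw [Finset.card_insert_of_notMem (by simp [h12, h13]),
      Finset.card_insert_of_notMem (by simp [h23]), Finset.card_singleton]
  -- total sum of fibers = card S
  have htotal : ∑ s : S, (Finset.univ.filter fun x => f x = s).card = Fintype.card S := by
    rw [← Finset.card_univ]
    exact (Finset.card_eq_sum_card_fiberwise (fun x _ => Finset.mem_univ (f x))).symm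
  -- fiber over v₃ is empty
  have h3 : (Finset.univ.filter fun x => f x = v₃).card = 0 := by
    rw [Finset.card_eq_zero, Finset.filter_eq_empty_iff]
    intro x _ hx
    exact hv₃ ⟨x, hx⟩
  have h1 : 1 ≤ (Finset.univ.filter fun x => f x = v₁).card := by
    obtain ⟨x, hx⟩ := hv₁
    exact Finset.card_pos.mpr ⟨x, by simp [hx]⟩
  have h2 : 1 ≤ (Finset.univ.filter fun x => f x = v₂).card := by
    obtain ⟨x, hx⟩ := hv₂
    exact Finset.card_pos.mpr ⟨x, by simp [hx]⟩
  have hsplit : ∑ s : S, (Finset.univ.filter fun x => f x = s).card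
      = ∑ s ∈ V, (Finset.univ.filter fun x => f x = s).card
        + ∑ s ∈ Finset.univ \ V, (Finset.univ.filter fun x => f x = s).card := by
    rw [← Finset.sum_union (Finset.disjoint_sdiff)]
    congr 1
    rw [Finset.union_sdiff_of_subset (Finset.subset_univ V)]
  have hVsum : ∑ s ∈ V, (Finset.univ.filter fun x => f x = s).card
      = (Finset.univ.filter fun x => f x = v₁).card
        + (Finset.univ.filter fun x => f x = v₂).card := by
    rw [hV, Finset.sum_insert (by simp [h12, h13]), Finset.sum_insert (by simp [h23]),
      Finset.sum_singleton, h3, Nat.add_zero]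
  have hcompl : (Finset.univ \ V).card = Fintype.card S - 3 := by
    rw [Finset.card_sdiff_of_subset (Finset.subset_univ V), Finset.card_univ, hVcard]
  have hrest : 2 * (Fintype.card S - 3)
      ≤ ∑ s ∈ Finset.univ \ V, (Finset.univ.filter fun x => f x = s).card := by
    rw [← hcompl]
    calc 2 * (Finset.univ \ V).card = ∑ _s ∈ Finset.univ \ V, 2 := by
          rw [Finset.sum_const, smul_eq_mul]; ring
      _ ≤ _ := Finset.sum_le_sum fun s hs => hfib s (Finset.mem_sdiff.mp hs).2
  -- deduce card S = 4
  have hle : Fintype.card S ≤ 4 := by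
    have := hsplit ▸ htotal
    omega
  have hc4 : Fintype.card S = 4 := le_antisymm hle hcard
  refine ⟨hc4, ?_⟩
  have hcompl1 : (Finset.univ \ V).card = 1 := by rw [hcompl, hc4]
  obtain ⟨t, ht⟩ := Finset.card_eq_one.mp hcompl1
  have htmem : t ∉ V := by
    have : t ∈ Finset.univ \ V := by rw [ht]; exact Finset.mem_singleton_self t
    exact (Finset.mem_sdiff.mp this).2
  have hrestsum : ∑ s ∈ Finset.univ \ V, (Finset.univ.filter fun x => f x = s).card
      = (Finset.univ.filter fun x => f x = t).card := by
    rw [ht, Finset.sum_singleton]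
  have ht2 : 2 ≤ (Finset.univ.filter fun x => f x = t).card := hfib t htmem
  have key : (Finset.univ.filter fun x => f x = v₁).card
      + (Finset.univ.filter fun x => f x = v₂).card
      + (Finset.univ.filter fun x => f x = t).card = 4 := by
    have := hsplit ▸ htotal
    rw [hVsum, hrestsum] at this
    omega
  exact ⟨t, htmem, by omega, by omega, h3, by omega⟩
end

section
/- Let d ≥ 2 and let λ, λ' be d-th roots of unity with λ ≠ 1 and λ' ≠ 1. The affine curve C = {(x,y,t') ∈ ℂ³ : 1+x = λ(1+y), y(t'+x) = λ'x(t'+y), t' ∉ {0,1}, x ≠ 0, y ≠ 0, (x/y)^d ≠ 1} has the property that the projection (x,y,t') ↦ t' is generically two-to-one; in particular, the projection (x,y,t') ↦ (x/y)^d is not constant on C when C is nonempty. -/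
/-!
Eliminating `x = λ(1 + y) - 1` turns the second equation into a quadratic in `y` with leading
coefficient `λ(1 - λ')`, so every fibre over `t'` has at most two points.

Conversely the curve is rational in the ratio `μ = x / y`: the first equation gives
`y = (λ - 1) / (μ - λ)` and the second, after dividing by `y`, gives
`t' = μ y (λ' - 1) / (1 - λ' μ)`. The only values of `μ ≠ 0` for which this fails to be
a point of `C` are `λ`, `1 / λ'`, `1` and `λ / λ'` (the last two are where `t' = 1`), all of which are
`d`-th roots of unity. Taking `μ = 2` and `μ = 3` gives points with different `(x / y)^d`.
-/

open Polynomial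

variable {K : Type*} [Field K] {d : ℕ}

theorem mul_ne_of_pow_eq_one {a b μ : K} (ha : a ^ d = 1) (hb : b ^ d = 1) (hμ : μ ^ d ≠ 1) :
    a * μ ≠ b := fun h => hμ <| calc
  μ ^ d = (a * μ) ^ d := by rw [mul_pow, ha, one_mul]
  _ = 1 := by rw [h, hb]

def ratioCurve (d : ℕ) (lam lam' : K) : Set (K × K × K) := {p |
  1 + p.1 = lam * (1 + p.2.1) ∧
  p.2.1 * (p.2.2 + p.1) = lam' * p.1 * (p.2.2 + p.2.1) ∧
  p.2.2 ≠ 0 ∧ p.2.2 ≠ 1 ∧ p.1 ≠ 0 ∧ p.2.1 ≠ 0 ∧ (p.1 / p.2.1) ^ d ≠ 1}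

namespace ratioCurve

variable {lam lam' : K}

noncomputable def fibrePoly (lam lam' t : K) : K[X] :=
  C (lam * (1 - lam')) * X ^ 2 + C (t * (1 - lam' * lam) + (lam - 1) * (1 - lam')) * X
    + C (-(lam' * (lam - 1) * t))

theorem fibrePoly_ne_zero (hlam : lam ≠ 0) (hlam'1 : lam' ≠ 1) (t : K) :
    fibrePoly lam lam' t ≠ 0 := by
  intro h
  have hdeg := natDegree_quadratic (mul_ne_zero hlam (sub_ne_zero.2 hlam'1.symm))
    (b := t * (1 - lam' * lam) + (lam - 1) * (1 - lam')) (c := -(lam' * (lam - 1) * t))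
  rw [← fibrePoly, h, natDegree_zero] at hdeg
  exact two_ne_zero hdeg.symm

theorem fibre_subset_image_rootSet (hlam : lam ≠ 0) (hlam'1 : lam' ≠ 1) (t : K) :
    {q : K × K | (q.1, q.2, t) ∈ ratioCurve d lam lam'} ⊆
      (fun y => (lam * (1 + y) - 1, y)) '' (fibrePoly lam lam' t).rootSet K := by
  rintro ⟨x, y⟩ ⟨h₁, h₂, -⟩
  refine ⟨y, ?_, by simp only [Prod.mk.injEq, and_true]; linear_combination -h₁⟩
  rw [mem_rootSet, coe_aeval_eq_eval]
  refine ⟨fibrePoly_ne_zero hlam hlam'1 t, ?_⟩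
  simp only [fibrePoly, eval_add, eval_mul, eval_C, eval_X, eval_pow]
  linear_combination h₂ - (y - lam' * (t + y)) * h₁

theorem finite_fibre_and_ncard_fibre_le_two (hlam : lam ≠ 0) (hlam'1 : lam' ≠ 1) (t : K) :
    {q : K × K | (q.1, q.2, t) ∈ ratioCurve d lam lam'}.Finite ∧
      {q : K × K | (q.1, q.2, t) ∈ ratioCurve d lam lam'}.ncard ≤ 2 := by
  have hsub := fibre_subset_image_rootSet (d := d) hlam hlam'1 t
  have himage_finite := (rootSet_finite (fibrePoly lam lam' t) K).image
    (fun y => (lam * (1 + y) - 1, y))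
  refine ⟨himage_finite.subset hsub, ?_⟩
  calc _ ≤ ((fun y => (lam * (1 + y) - 1, y)) '' (fibrePoly lam lam' t).rootSet K).ncard :=
        Set.ncard_le_ncard hsub himage_finite
    _ ≤ ((fibrePoly lam lam' t).rootSet K).ncard := Set.ncard_image_le (rootSet_finite _ K)
    _ ≤ (fibrePoly lam lam' t).natDegree := ncard_rootSet_le _ K
    _ ≤ 2 := natDegree_quadratic_le

noncomputable def ofRatio (lam lam' μ : K) : K × K × K :=
  let y := (lam - 1) / (μ - lam)
  (μ * y, y, μ * y * (lam' - 1) / (1 - lam' * μ))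

theorem ofRatio_mem (hlam : lam ^ d = 1) (hlam' : lam' ^ d = 1) (hlam1 : lam ≠ 1)
    (hlam'1 : lam' ≠ 1) {μ : K} (hμ0 : μ ≠ 0) (hμ : μ ^ d ≠ 1) :
    ofRatio lam lam' μ ∈ ratioCurve d lam lam' ∧
      (ofRatio lam lam' μ).1 / (ofRatio lam lam' μ).2.1 = μ := by
  have hμlam : μ - lam ≠ 0 :=
    sub_ne_zero.2 (by simpa using mul_ne_of_pow_eq_one (one_pow d) hlam hμ)
  have hden : 1 - lam' * μ ≠ 0 := sub_ne_zero.2 (mul_ne_of_pow_eq_one hlam' (one_pow d) hμ).symm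
  have hμ1 : μ - 1 ≠ 0 :=
    sub_ne_zero.2 (by simpa using mul_ne_of_pow_eq_one (one_pow d) (one_pow d) hμ)
  have hμlam' : lam' * μ - lam ≠ 0 := sub_ne_zero.2 (mul_ne_of_pow_eq_one hlam' hlam hμ)
  set y := (lam - 1) / (μ - lam)
  set t := μ * y * (lam' - 1) / (1 - lam' * μ)
  have hy : y ≠ 0 := div_ne_zero (sub_ne_zero.2 hlam1) hμlam
  have hy_eq : y * (μ - lam) = lam - 1 := div_mul_cancel₀ _ hμlam
  have ht_eq : t * (1 - lam' * μ) = μ * y * (lam' - 1) := div_mul_cancel₀ _ hden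
  have hratio : μ * y / y = μ := mul_div_cancel_right₀ _ hy
  rw [show ofRatio lam lam' μ = (μ * y, y, t) from rfl]
  refine ⟨⟨?_, ?_, ?_, ?_, mul_ne_zero hμ0 hy, hy, by rwa [hratio]⟩, hratio⟩
  · linear_combination hy_eq
  · linear_combination y * ht_eq
  · exact div_ne_zero (mul_ne_zero (mul_ne_zero hμ0 hy) (sub_ne_zero.2 hlam'1)) hden
  · intro (ht : t = 1)
    rw [ht] at ht_eq
    exact mul_ne_zero hμlam' hμ1
      (by linear_combination -(μ - lam) * ht_eq - μ * (lam' - 1) * hy_eq)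

theorem exists_ratio_pow_ne [CharZero K] (hd : d ≠ 0) (hlam : lam ^ d = 1)
    (hlam' : lam' ^ d = 1) (hlam1 : lam ≠ 1) (hlam'1 : lam' ≠ 1) :
    ∃ p ∈ ratioCurve d lam lam', ∃ q ∈ ratioCurve d lam lam',
      (p.1 / p.2.1) ^ d ≠ (q.1 / q.2.1) ^ d := by
  have hpow : ∀ n : ℕ, 2 ≤ n → ((n : K) ^ d ≠ 1) := fun n hn => by
    rw [Ne, Nat.cast_pow_eq_one hd]
    omega
  have h₂ := ofRatio_mem hlam hlam' hlam1 hlam'1 two_ne_zero (by exact_mod_cast hpow 2 le_rfl)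
  have h₃ := ofRatio_mem hlam hlam' hlam1 hlam'1 three_ne_zero
    (by exact_mod_cast hpow 3 (by norm_num))
  refine ⟨_, h₂.1, _, h₃.1, ?_⟩
  rw [h₂.2, h₃.2]
  exact_mod_cast (Nat.pow_lt_pow_left (by norm_num : 2 < 3) hd).ne

end ratioCurve

/-- For `d ≥ 2` and `d`-th roots of unity `λ, λ' ≠ 1`, consider the affine curve
`C = {(x, y, t') : 1 + x = λ(1+y), y(t'+x) = λ'x(t'+y), t' ∉ {0,1}, x ≠ 0,
y ≠ 0, (x/y)^d ≠ 1}`. The projection `(x, y, t') ↦ t'` is (generically)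
two-to-one — each fiber has at most 2 points — and the projection
`(x, y, t') ↦ (x/y)^d` is not constant on `C` when `C` is nonempty. -/
theorem stmt18 (d : ℕ) (hd : 2 ≤ d) (lam lam' : ℂ)
    (hlam : lam ^ d = 1) (hlam' : lam' ^ d = 1)
    (hlam1 : lam ≠ 1) (hlam'1 : lam' ≠ 1) :
    let C : Set (ℂ × ℂ × ℂ) := {p |
      1 + p.1 = lam * (1 + p.2.1) ∧
      p.2.1 * (p.2.2 + p.1) = lam' * p.1 * (p.2.2 + p.2.1) ∧
      p.2.2 ≠ 0 ∧ p.2.2 ≠ 1 ∧ p.1 ≠ 0 ∧ p.2.1 ≠ 0 ∧ (p.1 / p.2.1) ^ d ≠ 1}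
    (∀ t' : ℂ, {q : ℂ × ℂ | (q.1, q.2, t') ∈ C}.Finite ∧
      {q : ℂ × ℂ | (q.1, q.2, t') ∈ C}.ncard ≤ 2) ∧
    (C.Nonempty → ∃ p ∈ C, ∃ q ∈ C,
      (p.1 / p.2.1) ^ d ≠ (q.1 / q.2.1) ^ d) := by
  have hd0 : d ≠ 0 := by omega
  have hlam0 : lam ≠ 0 := (IsUnit.of_pow_eq_one hlam hd0).ne_zero
  intro C
  exact ⟨ratioCurve.finite_fibre_and_ncard_fibre_le_two hlam0 hlam'1,
    fun _ => ratioCurve.exists_ratio_pow_ne hd0 hlam hlam' hlam1 hlam'1⟩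
end
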